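/- arXiv:2304.08334 — 6 statements merged into one kernel-verified Lean document; each statement's English description precedes it below -/
import Mathlib

section
/- Let V be a finite type, let T be a tree on V (a connected simple graph on V with no cycles, e.g., SimpleGraph.IsTree in Mathlib), and let w : V → V → ℝ satisfy w i i' · w i' i = 1 for every pair of adjacent vertices i, i' of T. For j, k ∈ V define Z j k to be the product of w v_i v_{i+1} over the consecutive vertex pairs (v_i, v_{i+1}) of the unique path in T from j to k. Then Z is well-defined (independent of any choices, since the path is unique) and satisfies Z j k · Z k ℓ = Z j ℓ for all j, k, ℓ ∈ V. -/
/-- The product of the generating data `w` along the darts of a walk. -/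
def walkProd {V : Type*} {T : SimpleGraph V} (w : V → V → ℝ) {j k : V}
    (p : T.Walk j k) : ℝ :=
  (p.darts.map (fun d => w d.toProd.1 d.toProd.2)).prod

lemma walkProd_nil {V : Type*} {T : SimpleGraph V} (w : V → V → ℝ) {j : V} :
    walkProd w (SimpleGraph.Walk.nil : T.Walk j j) = 1 := rfl

lemma walkProd_cons {V : Type*} {T : SimpleGraph V} (w : V → V → ℝ) {j v k : V}
    (h : T.Adj j v) (p : T.Walk v k) :
    walkProd w (SimpleGraph.Walk.cons h p) = w j v * walkProd w p := by
  simp [walkProd]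

lemma walkProd_append {V : Type*} {T : SimpleGraph V} (w : V → V → ℝ) {j v k : V}
    (p : T.Walk j v) (q : T.Walk v k) :
    walkProd w (p.append q) = walkProd w p * walkProd w q := by
  simp [walkProd, SimpleGraph.Walk.darts_append]

lemma isPath_concat {V : Type*} {T : SimpleGraph V} {j v k : V}
    {p : T.Walk j v} (hp : p.IsPath) (h : T.Adj v k) (hk : k ∉ p.support) :
    (p.concat h).IsPath := by
  rw [← SimpleGraph.Walk.isPath_reverse_iff, SimpleGraph.Walk.reverse_concat]
  refine (SimpleGraph.Walk.cons_isPath_iff _ _).2 ⟨hp.reverse, ?_⟩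
  simpa using hk

theorem tree_assignment_wellDefined_and_multiplicative (V : Type*) [Fintype V]
    (T : SimpleGraph V) (hT : T.IsTree)
    (w : V → V → ℝ) (hw : ∀ i i', T.Adj i i' → w i i' * w i' i = 1)
    (Z : V → V → ℝ)
    (hZ : ∀ j k : V, ∀ p : T.Walk j k, p.IsPath → Z j k = walkProd w p) :
    (∀ j k : V, ∀ p q : T.Walk j k, p.IsPath → q.IsPath →
        walkProd w p = walkProd w q) ∧
      ∀ j k ℓ : V, Z j k * Z k ℓ = Z j ℓ := by
  classical
  have hVne : Nonempty V := hT.isConnected.nonempty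
  obtain ⟨r⟩ := hVne
  -- key step: for adjacent vertices, Z r i * w i i' = Z r i'
  have adj_step : ∀ i i', T.Adj i i' → Z r i * w i i' = Z r i' := by
    intro i i' hadj
    obtain ⟨p, hp, hpu⟩ := hT.existsUnique_path r i
    by_cases hmem : i' ∈ p.support
    · -- the path from r to i passes through i'; its tail must be the single edge i'-i
      have hsplit := p.take_spec hmem
      have hdrop : (p.dropUntil i' hmem).IsPath := hp.dropUntil hmem
      have htake : (p.takeUntil i' hmem).IsPath := hp.takeUntil hmem
      have hsingle : (SimpleGraph.Walk.cons hadj.symm SimpleGraph.Walk.nil :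
          T.Walk i' i).IsPath := by
        simp [SimpleGraph.Walk.cons_isPath_iff, hadj.ne']
      obtain ⟨q, hq, hqu⟩ := hT.existsUnique_path i' i
      have h1 : p.dropUntil i' hmem = q := hqu _ hdrop
      have h2 : (SimpleGraph.Walk.cons hadj.symm SimpleGraph.Walk.nil : T.Walk i' i) = q :=
        hqu _ hsingle
      have e := congrArg (walkProd w) hsplit
      have hZri : Z r i = walkProd w (p.takeUntil i' hmem) * w i' i := by
        rw [hZ r i p hp, ← e, walkProd_append, h1, ← h2, walkProd_cons, walkProd_nil,
          mul_one]
      have hZri' : Z r i' = walkProd w (p.takeUntil i' hmem) := hZ r i' _ htake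
      rw [hZri, hZri', mul_assoc, hw i' i hadj.symm, mul_one]
    · -- extend the path by the edge i-i'
      have hconcat : (p.concat hadj).IsPath := isPath_concat hp hadj hmem
      have : Z r i' = walkProd w (p.concat hadj) := hZ r i' _ hconcat
      rw [this, SimpleGraph.Walk.concat_eq_append, walkProd_append, walkProd_cons,
        walkProd_nil, mul_one, ← hZ r i p hp]
  -- for any walk from j to k, Z r j * walkProd = Z r k
  have walk_eval : ∀ (j k : V) (p : T.Walk j k), Z r j * walkProd w p = Z r k := by
    intro j k p
    induction p with
    | nil => rw [walkProd_nil, mul_one]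
    | cons h q ih =>
      rw [walkProd_cons, ← mul_assoc, adj_step _ _ h, ih]
  have hZrr : Z r r = 1 := by
    rw [hZ r r SimpleGraph.Walk.nil (by simp), walkProd_nil]
  have hZne : ∀ j, Z r j ≠ 0 := by
    intro j hzero
    obtain ⟨p, hp, -⟩ := hT.existsUnique_path j r
    have := walk_eval j r p
    rw [hzero, zero_mul] at this
    rw [← this] at hZrr
    norm_num at hZrr
  have hZeq : ∀ j k, Z j k = (Z r j)⁻¹ * Z r k := by
    intro j k
    obtain ⟨p, hp, -⟩ := hT.existsUnique_path j k
    have h1 := walk_eval j k p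
    rw [← hZ j k p hp] at h1
    field_simp [hZne j] at h1 ⊢
    linarith [h1]
  constructor
  · intro j k p q hp hq
    have h1 := walk_eval j k p
    have h2 := walk_eval j k q
    rw [← h2] at h1
    exact mul_left_cancel₀ (hZne j) h1
  · intro j k ℓ
    rw [hZeq j k, hZeq k ℓ, hZeq j ℓ, mul_assoc, ← mul_assoc (Z r k),
      mul_inv_cancel₀ (hZne k), one_mul]
end

section
/- Let V be a finite type, let Z : V → V → ℝ, and suppose there exist j ≠ k in V such that Z j ℓ = Z j k · Z k ℓ for all ℓ ∈ V. If there exists a weighting for Z, i.e., a vector w : V → ℝ with ∑_{ℓ} Z i ℓ · w ℓ = 1 for every i ∈ V, then Z j k = 1. -/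
theorem weighting_forces_unit (V : Type*) [Fintype V] (Z : V → V → ℝ)
    (j k : V) (hjk : j ≠ k) (hprop : ∀ ℓ, Z j ℓ = Z j k * Z k ℓ)
    (w : V → ℝ) (hw : ∀ i, ∑ ℓ, Z i ℓ * w ℓ = 1) :
    Z j k = 1 := by
  have h := hw j
  calc Z j k = Z j k * ∑ ℓ, Z k ℓ * w ℓ := by rw [hw k, mul_one]
    _ = ∑ ℓ, Z j ℓ * w ℓ := by
        rw [Finset.mul_sum]; exact Finset.sum_congr rfl fun ℓ _ => by
          rw [hprop ℓ, mul_assoc]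
    _ = 1 := h
end

section
/- Let V be a finite nonempty type, let p : V → ℝ with p j ≠ 0 for all j, and define Z j k := (p j)⁻¹ · p k. If there exists w : V → ℝ with ∑_{k} Z j k · w k = 1 for every j ∈ V, then p is constant (so Z j k = 1 for all j, k) and ∑_{k} w k = 1; in particular the magnitude of the corresponding enriched category equals 1. -/
theorem weighting_forces_constant_and_unit_magnitude (V : Type*) [Fintype V] [Nonempty V]
    (p : V → ℝ) (hp : ∀ j, p j ≠ 0)
    (Z : V → V → ℝ) (hZ : ∀ j k, Z j k = (p j)⁻¹ * p k)
    (w : V → ℝ) (hw : ∀ j, ∑ k, Z j k * w k = 1) :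
    (∀ j k, p j = p k) ∧ (∀ j k, Z j k = 1) ∧ ∑ k, w k = 1 := by
  have key : ∀ j, ∑ k, p k * w k = p j := by
    intro j
    have h := hw j
    simp only [hZ, mul_assoc] at h
    rw [← Finset.mul_sum] at h
    field_simp at h
    rw [div_eq_one_iff_eq (hp j)] at h
    exact h
  have hpc : ∀ j k, p j = p k := fun j k => ((key j).symm.trans (key k))
  refine ⟨hpc, fun j k => by rw [hZ, hpc j k, inv_mul_cancel₀ (hp k)], ?_⟩
  obtain ⟨j⟩ := ‹Nonempty V›
  have h := hw j
  have : ∑ k, Z j k * w k = ∑ k, w k := by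
    apply Finset.sum_congr rfl
    intro k _
    rw [hZ, hpc j k, inv_mul_cancel₀ (hp k), one_mul]
  linarith [this ▸ h]
end

section
/- Let V be a finite type and Z : V → V → ℝ. If w : V → ℝ is a weighting for Z (i.e., ∑_{k} Z j k · w k = 1 for every j ∈ V) and v : V → ℝ is a coweighting for Z (i.e., ∑_{j} v j · Z j k = 1 for every k ∈ V), then ∑_{j} w j = ∑_{j} v j. -/
theorem weighting_coweighting_sums_agree (V : Type*) [Fintype V] (Z : V → V → ℝ)
    (w : V → ℝ) (hw : ∀ j, ∑ k, Z j k * w k = 1)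
    (v : V → ℝ) (hv : ∀ k, ∑ j, v j * Z j k = 1) :
    ∑ j, w j = ∑ j, v j := by
  calc ∑ j, w j = ∑ k, (∑ j, v j * Z j k) * w k := by
        simp [hv]
    _ = ∑ j, v j * ∑ k, Z j k * w k := by
        simp only [Finset.sum_mul, Finset.mul_sum, mul_assoc]
        rw [Finset.sum_comm]
    _ = ∑ j, v j := by simp [hw]
end

section
/- Let n be a positive integer and let W : Matrix (Fin n) (Fin n) ℝ be invertible with all entries positive. Set M := W⁻¹, define H : Fin n → ℝ by H j := −∑_{k} W j k · Real.log (W j k), define v : Fin n → ℝ by v j := ∑_{i} M i j · Real.exp (−(M.mulVec H) i), and define Z : Matrix (Fin n) (Fin n) ℝ by Z j k := W j k · Real.exp ((M.mulVec H) k). Then v is a coweighting for Z: ∑_{j} v j · Z j k = 1 for every k ∈ Fin n. -/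
theorem muroga_coweighting (n : ℕ) (hn : 0 < n) (W : Matrix (Fin n) (Fin n) ℝ)
    (hW : IsUnit W.det) (hpos : ∀ i j, 0 < W i j)
    (H : Fin n → ℝ) (hH : ∀ j, H j = -∑ k, W j k * Real.log (W j k))
    (v : Fin n → ℝ)
    (hv : ∀ j, v j = ∑ i, W⁻¹ i j * Real.exp (-(W⁻¹.mulVec H) i))
    (Z : Matrix (Fin n) (Fin n) ℝ)
    (hZ : ∀ j k, Z j k = W j k * Real.exp ((W⁻¹.mulVec H) k)) :
    ∀ k, ∑ j, v j * Z j k = 1 := by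
  intro k
  have hinv : W⁻¹ * W = 1 := Matrix.nonsing_inv_mul W hW
  set u := (W⁻¹).mulVec H with hu
  calc ∑ j, v j * Z j k
      = ∑ j, ∑ i, (W⁻¹ i j * Real.exp (-u i)) * (W j k * Real.exp (u k)) := by
        simp only [hv, hZ, Finset.sum_mul]
    _ = ∑ i, (∑ j, W⁻¹ i j * W j k) * (Real.exp (-u i) * Real.exp (u k)) := by
        rw [Finset.sum_comm]
        refine Finset.sum_congr rfl fun i _ => ?_
        rw [Finset.sum_mul]
        exact Finset.sum_congr rfl fun j _ => by ring
    _ = ∑ i, (1 : Matrix (Fin n) (Fin n) ℝ) i k * (Real.exp (-u i) * Real.exp (u k)) := by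
        refine Finset.sum_congr rfl fun i _ => ?_
        rw [← Matrix.mul_apply, hinv]
    _ = Real.exp (-u k) * Real.exp (u k) := by
        simp [Matrix.one_apply]
    _ = 1 := by rw [← Real.exp_add]; simp
end

section
/- Let n be a finite type and let W : Matrix n n ℝ be row-stochastic (all entries nonnegative and each row sums to 1) and invertible. If all entries of W⁻¹ are nonnegative, then W is a permutation matrix: there exists a permutation σ of n such that W i j = 1 if j = σ i and W i j = 0 otherwise. -/
theorem stochastic_nonneg_inverse_is_permutation (n : Type*) [Fintype n] [DecidableEq n]
    (W : Matrix n n ℝ) (hnn : ∀ i j, 0 ≤ W i j) (hrow : ∀ i, ∑ j, W i j = 1)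
    (hinv : IsUnit W.det) (hinvnn : ∀ i j, 0 ≤ W⁻¹ i j) :
    ∃ σ : Equiv.Perm n, ∀ i j, W i j = if j = σ i then 1 else 0 := by
  set V := W⁻¹ with hV
  have hWV : W * V = 1 := Matrix.mul_nonsing_inv W hinv
  have hVW : V * W = 1 := Matrix.nonsing_inv_mul W hinv
  have hVrow : ∀ j, ∑ k, V j k = 1 := by
    intro j
    have h1 : ∑ k, (V * W) j k = ∑ m, V j m := by
      simp only [Matrix.mul_apply]
      rw [Finset.sum_comm]
      simp [← Finset.mul_sum, hrow]
    rw [hVW] at h1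
    simp only [Matrix.one_apply] at h1
    rw [Finset.sum_ite_eq Finset.univ j (fun _ => (1:ℝ))] at h1
    simp at h1
    exact h1.symm
  have hf : ∀ i, ∃ j, 0 < W i j := by
    intro i
    by_contra h
    push_neg at h
    have hz : ∀ j, W i j = 0 := fun j => le_antisymm (h j) (hnn i j)
    have := hrow i
    simp [hz] at this
  choose f hfpos using hf
  have key : ∀ i k, k ≠ i → V (f i) k = 0 := by
    intro i k hk
    have h0 : (W * V) i k = 0 := by
      rw [hWV, Matrix.one_apply]
      simp [Ne.symm hk]
    rw [Matrix.mul_apply] at h0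
    have hterm : ∀ j ∈ Finset.univ, (0:ℝ) ≤ W i j * V j k :=
      fun j _ => mul_nonneg (hnn i j) (hinvnn j k)
    have h2 := (Finset.sum_eq_zero_iff_of_nonneg hterm).mp h0 (f i) (Finset.mem_univ _)
    exact (mul_eq_zero.mp h2).resolve_left (ne_of_gt (hfpos i))
  have keyi : ∀ i, V (f i) i = 1 := by
    intro i
    have h := hVrow (f i)
    rwa [Finset.sum_eq_single i (fun k _ hk => key i k hk) (by simp)] at h
  have finj : Function.Injective f := by
    intro i i' h
    by_contra hne
    have h1 := key i' i hne
    rw [← h] at h1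
    rw [keyi i] at h1
    norm_num at h1
  let e := Equiv.ofBijective f (Finite.injective_iff_bijective.mp finj)
  have hW : ∀ m k, W m k = if k = f m then 1 else 0 := by
    intro m k
    have h1 : (V * W) (f m) k = W m k := by
      rw [Matrix.mul_apply, Finset.sum_eq_single m]
      · rw [keyi m, one_mul]
      · intro j _ hj; rw [key m j hj, zero_mul]
      · simp
    rw [hVW, Matrix.one_apply] at h1
    rw [← h1]
    simp [eq_comm]
  exact ⟨e, fun i j => hW i j⟩
end
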